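/- arXiv:2103.05995 — 2 statements merged into one kernel-verified Lean document; each statement's English description precedes it below -/
import Mathlib

section
/- Let G0 be a connected finite simple graph containing distinct vertices u1, u2, u3, u4 with d_{G0}(u1) = 1, d_{G0}(u2) = 2, d_{G0}(u3) ∈ {3, 4}, d_{G0}(u4) = 1, such that u1u2 and u3u4 are edges of G0. Let P = v1v2⋯vl (l ≥ 1) be a path vertex-disjoint from G0, let G1 be the graph obtained from the disjoint union of G0 and P by adding the edge u1v1, and let G2 be obtained from G1 by deleting the edge u1v1 and adding the edge u4v1. Then SO_red(G1) > SO_red(G2). -/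
open SimpleGraph

/-- Degree of a vertex (instance-free version). -/
noncomputable def gdeg {V : Type*} [Fintype V] (G : SimpleGraph V) (v : V) : ℕ :=
  (Set.toFinite (G.neighborSet v)).toFinset.card

/-- Sombor index: sum over edges of sqrt(d(u)^2 + d(v)^2). -/
noncomputable def SO {V : Type*} [Fintype V] (G : SimpleGraph V) : ℝ :=
  ∑ e ∈ (Set.toFinite G.edgeSet).toFinset,
    Sym2.lift ⟨fun u v => Real.sqrt ((gdeg G u : ℝ) ^ 2 + (gdeg G v : ℝ) ^ 2),
      fun u v => by dsimp only; rw [add_comm]⟩ e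

/-- Reduced Sombor index: sum over edges of sqrt((d(u)-1)^2 + (d(v)-1)^2). -/
noncomputable def SOred {V : Type*} [Fintype V] (G : SimpleGraph V) : ℝ :=
  ∑ e ∈ (Set.toFinite G.edgeSet).toFinset,
    Sym2.lift ⟨fun u v => Real.sqrt (((gdeg G u : ℝ) - 1) ^ 2 + ((gdeg G v : ℝ) - 1) ^ 2),
      fun u v => by dsimp only; rw [add_comm]⟩ e

section aux
variable {V : Type*} [Fintype V]
set_option linter.unusedSectionVars false

/-- The edge weight function of the reduced Sombor index. -/
noncomputable def wt (G : SimpleGraph V) : Sym2 V → ℝ :=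
  Sym2.lift ⟨fun u v => Real.sqrt (((gdeg G u : ℝ) - 1) ^ 2 + ((gdeg G v : ℝ) - 1) ^ 2),
    fun u v => by dsimp only; rw [add_comm]⟩

lemma wt_mk (G : SimpleGraph V) (x y : V) :
    wt G s(x, y) = Real.sqrt (((gdeg G x : ℝ) - 1) ^ 2 + ((gdeg G y : ℝ) - 1) ^ 2) := rfl

lemma SOred_eq_sum_wt (G : SimpleGraph V) :
    SOred G = ∑ e ∈ (Set.toFinite G.edgeSet).toFinset, wt G e := rfl

lemma sum_adj_inl {α β : Type*} (G : SimpleGraph α) (P : SimpleGraph β) (a b : α) :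
    (G ⊕g P).Adj (Sum.inl a) (Sum.inl b) ↔ G.Adj a b := by
  simp [SimpleGraph.sum]

lemma sum_not_adj_lr {α β : Type*} (G : SimpleGraph α) (P : SimpleGraph β) (a : α) (b : β) :
    ¬ (G ⊕g P).Adj (Sum.inl a) (Sum.inr b) := by
  simp [SimpleGraph.sum]

lemma sum_not_adj_rl {α β : Type*} (G : SimpleGraph α) (P : SimpleGraph β) (a : α) (b : β) :
    ¬ (G ⊕g P).Adj (Sum.inr b) (Sum.inl a) := by
  simp [SimpleGraph.sum]

lemma gdeg_eq_ncard (G : SimpleGraph V) (v : V) :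
    gdeg G v = (G.neighborSet v).ncard := by
  rw [gdeg, Set.ncard_eq_toFinset_card _ (Set.toFinite _)]

lemma ns_sup_of_ne (H : SimpleGraph V) {a b v : V} (hva : v ≠ a) (hvb : v ≠ b) :
    (H ⊔ fromEdgeSet {s(a,b)}).neighborSet v = H.neighborSet v := by
  ext w
  simp only [neighborSet, sup_adj, fromEdgeSet_adj, Set.mem_singleton_iff, Sym2.eq_iff,
    Set.mem_setOf_eq]
  aesop

lemma ns_sup_left (H : SimpleGraph V) {a b : V} (hab : a ≠ b) :
    (H ⊔ fromEdgeSet {s(a,b)}).neighborSet a = insert b (H.neighborSet a) := by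
  ext w
  simp only [neighborSet, sup_adj, fromEdgeSet_adj, Set.mem_singleton_iff, Sym2.eq_iff,
    Set.mem_setOf_eq, Set.mem_insert_iff]
  aesop

lemma ns_sup_right (H : SimpleGraph V) {a b : V} (hab : a ≠ b) :
    (H ⊔ fromEdgeSet {s(a,b)}).neighborSet b = insert a (H.neighborSet b) := by
  ext w
  simp only [neighborSet, sup_adj, fromEdgeSet_adj, Set.mem_singleton_iff, Sym2.eq_iff,
    Set.mem_setOf_eq, Set.mem_insert_iff]
  aesop

lemma gdeg_sup_of_ne {H : SimpleGraph V} {a b v : V}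
    (hva : v ≠ a) (hvb : v ≠ b) :
    gdeg (H ⊔ fromEdgeSet {s(a,b)}) v = gdeg H v := by
  rw [gdeg_eq_ncard, gdeg_eq_ncard, ns_sup_of_ne H hva hvb]

lemma gdeg_sup_left {H : SimpleGraph V} {a b : V} (hab : a ≠ b) (hna : ¬ H.Adj a b) :
    gdeg (H ⊔ fromEdgeSet {s(a,b)}) a = gdeg H a + 1 := by
  rw [gdeg_eq_ncard, gdeg_eq_ncard, ns_sup_left H hab,
    Set.ncard_insert_of_notMem (by simpa using hna)]

lemma gdeg_sup_right {H : SimpleGraph V} {a b : V} (hab : a ≠ b) (hna : ¬ H.Adj a b) :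
    gdeg (H ⊔ fromEdgeSet {s(a,b)}) b = gdeg H b + 1 := by
  rw [gdeg_eq_ncard, gdeg_eq_ncard, ns_sup_right H hab,
    Set.ncard_insert_of_notMem (by simpa using fun h => hna h.symm)]

lemma ns_suminl {α β : Type*} (G : SimpleGraph α) (P : SimpleGraph β) (u : α) :
    (G ⊕g P).neighborSet (Sum.inl u) = Sum.inl '' G.neighborSet u := by
  ext w; cases w <;> simp [neighborSet]

lemma gdeg_suminl {α β : Type*} [Fintype α] [Fintype β] (G : SimpleGraph α)
    (P : SimpleGraph β) (u : α) :
    gdeg (G ⊕g P) (Sum.inl u) = gdeg G u := by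
  rw [gdeg_eq_ncard, gdeg_eq_ncard, ns_suminl,
    Set.ncard_image_of_injective _ Sum.inl_injective]

lemma edgeSet_sup_single (H : SimpleGraph V) {a b : V} (hab : a ≠ b) :
    (H ⊔ fromEdgeSet {s(a,b)}).edgeSet = insert s(a,b) H.edgeSet := by
  rw [edgeSet_sup, edgeSet_fromEdgeSet]
  ext f
  simp only [Set.mem_union, Set.mem_diff, Set.mem_singleton_iff, Set.mem_setOf_eq,
    Set.mem_insert_iff]
  constructor
  · rintro (h | ⟨rfl, -⟩)
    · exact Or.inr h
    · exact Or.inl rfl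
  · rintro (rfl | h)
    · exact Or.inr ⟨rfl, by simp [hab]⟩
    · exact Or.inl h

end aux

set_option maxHeartbeats 1000000 in
/-- Lemma 2.1 for `SOred`: moving the pendant path from the vertex u₁ of degree 1
(adjacent to a vertex of degree 2) to the vertex u₄ of degree 1 (adjacent to a vertex of
degree 3 or 4) strictly decreases the index. -/
theorem lemma21_SOred {α : Type*} [Fintype α] (G₀ : SimpleGraph α)
    (hconn : G₀.Connected) (u₁ u₂ u₃ u₄ : α)
    (hdist : List.Pairwise (· ≠ ·) [u₁, u₂, u₃, u₄])
    (hd₁ : gdeg G₀ u₁ = 1) (hd₂ : gdeg G₀ u₂ = 2)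
    (hd₃ : gdeg G₀ u₃ = 3 ∨ gdeg G₀ u₃ = 4) (hd₄ : gdeg G₀ u₄ = 1)
    (he₁₂ : G₀.Adj u₁ u₂) (he₃₄ : G₀.Adj u₃ u₄)
    (l : ℕ) (hl : 1 ≤ l)
    (G₁ G₂ : SimpleGraph (α ⊕ Fin l))
    (hG₁ : G₁ = (G₀ ⊕g pathGraph l) ⊔
      fromEdgeSet {s(Sum.inl u₁, Sum.inr ⟨0, by omega⟩)})
    (hG₂ : G₂ = (G₁.deleteEdges {s(Sum.inl u₁, Sum.inr ⟨0, by omega⟩)}) ⊔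
      fromEdgeSet {s(Sum.inl u₄, Sum.inr ⟨0, by omega⟩)}) :
    SOred G₂ < SOred G₁ := by
  classical
  simp only [List.pairwise_cons, List.mem_cons, List.mem_singleton, List.not_mem_nil,
    List.Pairwise.nil, and_true] at hdist
  obtain ⟨h1, h2, h34, -⟩ := hdist
  have h12 : u₁ ≠ u₂ := h1 u₂ (by tauto)
  have h13 : u₁ ≠ u₃ := h1 u₃ (by tauto)
  have h14 : u₁ ≠ u₄ := h1 u₄ (by tauto)
  have h23 : u₂ ≠ u₃ := h2 u₃ (by tauto)
  have h24 : u₂ ≠ u₄ := h2 u₄ (by tauto)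
  set H : SimpleGraph (α ⊕ Fin l) := G₀ ⊕g pathGraph l with hHdef
  set v₀ : α ⊕ Fin l := Sum.inr ⟨0, hl⟩ with hv₀def
  -- normalize the hypotheses (proof irrelevance for the `Fin` proofs)
  have hG₁' : G₁ = H ⊔ fromEdgeSet {s(Sum.inl u₁, v₀)} := hG₁
  have hG₂' : G₂ = (G₁.deleteEdges {s(Sum.inl u₁, v₀)}) ⊔ fromEdgeSet {s(Sum.inl u₄, v₀)} := hG₂
  have hav₀ : (Sum.inl u₁ : α ⊕ Fin l) ≠ v₀ := by simp [hv₀def]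
  have hbv₀ : (Sum.inl u₄ : α ⊕ Fin l) ≠ v₀ := by simp [hv₀def]
  have hnadj₁ : ¬ H.Adj (Sum.inl u₁) v₀ := sum_not_adj_lr _ _ _ _
  have hnadj₄ : ¬ H.Adj (Sum.inl u₄) v₀ := sum_not_adj_lr _ _ _ _
  -- delete the added edge to recover H
  have hdel : G₁.deleteEdges {s(Sum.inl u₁, v₀)} = H := by
    rw [hG₁']
    ext x y
    simp only [deleteEdges_adj, sup_adj, fromEdgeSet_adj, Set.mem_singleton_iff]
    constructor
    · rintro ⟨(h | ⟨he, -⟩), hne⟩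
      · exact h
      · exact absurd he hne
    · intro h
      refine ⟨Or.inl h, fun he => ?_⟩
      rw [Sym2.eq_iff] at he
      rcases he with ⟨rfl, rfl⟩ | ⟨rfl, rfl⟩
      · exact hnadj₁ h
      · exact hnadj₁ h.symm
  have hG₂'' : G₂ = H ⊔ fromEdgeSet {s(Sum.inl u₄, v₀)} := by rw [hG₂', hdel]
  -- neighbor sets of the pendant vertices in G₀
  have hN1 : G₀.neighborSet u₁ = {u₂} := by
    have hcard : (G₀.neighborSet u₁).ncard = 1 := by rw [← gdeg_eq_ncard]; exact hd₁
    obtain ⟨x, hx⟩ := Set.ncard_eq_one.mp hcard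
    have hm : u₂ ∈ G₀.neighborSet u₁ := he₁₂
    rw [hx] at hm ⊢
    simp only [Set.mem_singleton_iff] at hm
    rw [hm]
  have hN4 : G₀.neighborSet u₄ = {u₃} := by
    have hcard : (G₀.neighborSet u₄).ncard = 1 := by rw [← gdeg_eq_ncard]; exact hd₄
    obtain ⟨x, hx⟩ := Set.ncard_eq_one.mp hcard
    have hm : u₃ ∈ G₀.neighborSet u₄ := he₃₄.symm
    rw [hx] at hm ⊢
    simp only [Set.mem_singleton_iff] at hm
    rw [hm]
  -- incidence: the only H-edge at inl u₁ is e12, at inl u₄ is e34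
  have hadj1 : ∀ y, H.Adj (Sum.inl u₁) y → y = Sum.inl u₂ := by
    intro y hy
    cases y with
    | inl w =>
      have : w ∈ G₀.neighborSet u₁ := (sum_adj_inl _ _ _ _).mp hy
      rw [hN1] at this
      simp only [Set.mem_singleton_iff] at this
      rw [this]
    | inr w => exact absurd hy (sum_not_adj_lr _ _ _ _)
  have hadj4 : ∀ y, H.Adj (Sum.inl u₄) y → y = Sum.inl u₃ := by
    intro y hy
    cases y with
    | inl w =>
      have : w ∈ G₀.neighborSet u₄ := (sum_adj_inl _ _ _ _).mp hy
      rw [hN4] at this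
      simp only [Set.mem_singleton_iff] at this
      rw [this]
    | inr w => exact absurd hy (sum_not_adj_lr _ _ _ _)
  set e12 : Sym2 (α ⊕ Fin l) := s(Sum.inl u₁, Sum.inl u₂) with he12def
  set e34 : Sym2 (α ⊕ Fin l) := s(Sum.inl u₃, Sum.inl u₄) with he34def
  have hinc₁ : ∀ e ∈ H.edgeSet, Sum.inl u₁ ∈ e → e = e12 := by
    intro e he hm
    induction e with
    | _ x y =>
      rw [mem_edgeSet] at he
      rw [Sym2.mem_iff] at hm
      rcases hm with rfl | rfl
      · rw [hadj1 y he]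
      · rw [hadj1 x he.symm, Sym2.eq_swap]
  have hinc₄ : ∀ e ∈ H.edgeSet, Sum.inl u₄ ∈ e → e = e34 := by
    intro e he hm
    induction e with
    | _ x y =>
      rw [mem_edgeSet] at he
      rw [Sym2.mem_iff] at hm
      rcases hm with rfl | rfl
      · rw [hadj4 y he, Sym2.eq_swap]
      · rw [hadj4 x he.symm]
  -- degrees
  have hH1 : gdeg H (Sum.inl u₁) = 1 := (gdeg_suminl G₀ (pathGraph l) u₁).trans hd₁
  have hH2 : gdeg H (Sum.inl u₂) = 2 := (gdeg_suminl G₀ (pathGraph l) u₂).trans hd₂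
  have hH4 : gdeg H (Sum.inl u₄) = 1 := (gdeg_suminl G₀ (pathGraph l) u₄).trans hd₄
  have hd₃' : gdeg H (Sum.inl u₃) = gdeg G₀ u₃ := gdeg_suminl G₀ (pathGraph l) u₃
  have hG₁u₁ : gdeg G₁ (Sum.inl u₁) = 2 := by
    rw [hG₁', gdeg_sup_left hav₀ hnadj₁, hH1]
  have hG₁u₂ : gdeg G₁ (Sum.inl u₂) = 2 := by
    rw [hG₁', gdeg_sup_of_ne (by simp [h12.symm]) (by simp [hv₀def]), hH2]
  have hG₁u₃ : gdeg G₁ (Sum.inl u₃) = gdeg G₀ u₃ := by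
    rw [hG₁', gdeg_sup_of_ne (by simp [h13.symm]) (by simp [hv₀def]), hd₃']
  have hG₁u₄ : gdeg G₁ (Sum.inl u₄) = 1 := by
    rw [hG₁', gdeg_sup_of_ne (by simp [h14.symm]) (by simp [hv₀def]), hH4]
  have hG₁v₀ : gdeg G₁ v₀ = gdeg H v₀ + 1 := by
    rw [hG₁', gdeg_sup_right hav₀ hnadj₁]
  have hG₂u₁ : gdeg G₂ (Sum.inl u₁) = 1 := by
    rw [hG₂'', gdeg_sup_of_ne (by simp [h14]) (by simp [hv₀def]), hH1]
  have hG₂u₂ : gdeg G₂ (Sum.inl u₂) = 2 := by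
    rw [hG₂'', gdeg_sup_of_ne (by simp [h24]) (by simp [hv₀def]), hH2]
  have hG₂u₃ : gdeg G₂ (Sum.inl u₃) = gdeg G₀ u₃ := by
    rw [hG₂'', gdeg_sup_of_ne (by simp [h34]) (by simp [hv₀def]), hd₃']
  have hG₂u₄ : gdeg G₂ (Sum.inl u₄) = 2 := by
    rw [hG₂'', gdeg_sup_left hbv₀ hnadj₄, hH4]
  have hG₂v₀ : gdeg G₂ v₀ = gdeg H v₀ + 1 := by
    rw [hG₂'', gdeg_sup_right hbv₀ hnadj₄]
  have hsame : ∀ x : α ⊕ Fin l, x ≠ Sum.inl u₁ → x ≠ Sum.inl u₄ → gdeg G₁ x = gdeg G₂ x := by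
    intro x hx1 hx4
    by_cases hxv : x = v₀
    · rw [hxv, hG₁v₀, hG₂v₀]
    · rw [hG₁', gdeg_sup_of_ne hx1 hxv, hG₂'', gdeg_sup_of_ne hx4 hxv]
  -- edge finsets
  set EH : Finset (Sym2 (α ⊕ Fin l)) := (Set.toFinite H.edgeSet).toFinset with hEHdef
  have hmemEH : ∀ e, e ∈ EH ↔ e ∈ H.edgeSet := by
    intro e; rw [hEHdef, Set.Finite.mem_toFinset]
  have he12EH : e12 ∈ EH := by
    rw [hmemEH, he12def, mem_edgeSet]
    exact (sum_adj_inl _ _ _ _).mpr he₁₂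
  have he34EH : e34 ∈ EH := by
    rw [hmemEH, he34def, mem_edgeSet]
    exact (sum_adj_inl _ _ _ _).mpr he₃₄
  have hne1234 : e34 ≠ e12 := by
    rw [he12def, he34def]
    intro h
    rw [Sym2.eq_iff] at h
    rcases h with ⟨h, h'⟩ | ⟨h, h'⟩
    · exact h13 (Sum.inl_injective h).symm
    · exact h14 (Sum.inl_injective h').symm
  have heP1 : s(Sum.inl u₁, v₀) ∉ EH := by
    rw [hmemEH, mem_edgeSet]
    exact hnadj₁
  have heP4 : s(Sum.inl u₄, v₀) ∉ EH := by
    rw [hmemEH, mem_edgeSet]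
    exact hnadj₄
  -- sum decomposition
  have hsplit : ∀ W : Sym2 (α ⊕ Fin l) → ℝ,
      ∑ e ∈ EH, W e = W e12 + W e34 + ∑ e ∈ (EH.erase e12).erase e34, W e := by
    intro W
    rw [add_assoc, Finset.add_sum_erase _ W (Finset.mem_erase.mpr ⟨hne1234, he34EH⟩),
      Finset.add_sum_erase _ W he12EH]
  have hrest : ∑ e ∈ (EH.erase e12).erase e34, wt G₁ e
      = ∑ e ∈ (EH.erase e12).erase e34, wt G₂ e := by
    refine Finset.sum_congr rfl fun e he => ?_
    have he34' : e ≠ e34 := Finset.ne_of_mem_erase he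
    have he' := Finset.mem_of_mem_erase he
    have he12' : e ≠ e12 := Finset.ne_of_mem_erase he'
    have heH : e ∈ H.edgeSet := (hmemEH e).mp (Finset.mem_of_mem_erase he')
    induction e with
    | _ x y =>
      have hx : gdeg G₁ x = gdeg G₂ x := by
        refine hsame x (fun hx1 => ?_) (fun hx4 => ?_)
        · exact he12' (hinc₁ _ heH (hx1 ▸ Sym2.mem_mk_left x y))
        · exact he34' (hinc₄ _ heH (hx4 ▸ Sym2.mem_mk_left x y))
      have hy : gdeg G₁ y = gdeg G₂ y := by
        refine hsame y (fun hy1 => ?_) (fun hy4 => ?_)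
        · exact he12' (hinc₁ _ heH (hy1 ▸ Sym2.mem_mk_right x y))
        · exact he34' (hinc₄ _ heH (hy4 ▸ Sym2.mem_mk_right x y))
      rw [wt_mk, wt_mk, hx, hy]
  -- the two SOred values
  have hS1 : SOred G₁ = wt G₁ s(Sum.inl u₁, v₀) + ∑ e ∈ EH, wt G₁ e := by
    rw [SOred_eq_sum_wt]
    have hset : (Set.toFinite G₁.edgeSet).toFinset = insert s(Sum.inl u₁, v₀) EH := by
      ext f
      simp only [Set.Finite.mem_toFinset, Finset.mem_insert, hmemEH]
      rw [hG₁', edgeSet_sup_single H hav₀, Set.mem_insert_iff]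
    rw [hset, Finset.sum_insert heP1]
  have hS2 : SOred G₂ = wt G₂ s(Sum.inl u₄, v₀) + ∑ e ∈ EH, wt G₂ e := by
    rw [SOred_eq_sum_wt]
    have hset : (Set.toFinite G₂.edgeSet).toFinset = insert s(Sum.inl u₄, v₀) EH := by
      ext f
      simp only [Set.Finite.mem_toFinset, Finset.mem_insert, hmemEH]
      rw [hG₂'', edgeSet_sup_single H hbv₀, Set.mem_insert_iff]
    rw [hset, Finset.sum_insert heP4]
  -- the pendant-edge weights coincide
  have hpend : wt G₁ s(Sum.inl u₁, v₀) = wt G₂ s(Sum.inl u₄, v₀) := by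
    rw [wt_mk, wt_mk, hG₁u₁, hG₂u₄, hG₁v₀, hG₂v₀]
  rw [hS1, hS2, hsplit (wt G₁), hsplit (wt G₂), hrest, hpend]
  have hkey : wt G₂ e12 + wt G₂ e34 < wt G₁ e12 + wt G₁ e34 := by
    rw [he12def, he34def, wt_mk, wt_mk, wt_mk, wt_mk,
      hG₁u₁, hG₁u₂, hG₁u₃, hG₁u₄, hG₂u₁, hG₂u₂, hG₂u₃, hG₂u₄]
    have hs2 : (1:ℝ) < Real.sqrt 2 := by
      have h := Real.sq_sqrt (by norm_num : (2:ℝ) ≥ 0)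
      nlinarith [Real.sqrt_nonneg 2]
    rcases hd₃ with hd | hd <;> rw [hd] <;> push_cast <;> norm_num
    · have h4 : Real.sqrt 4 = 2 := by
        rw [show (4:ℝ) = 2^2 by norm_num, Real.sqrt_sq (by norm_num : (0:ℝ) ≤ 2)]
      have h5 : Real.sqrt 5 < 1 + Real.sqrt 2 := by
        nlinarith [Real.sq_sqrt (show (0:ℝ) ≤ 5 by norm_num),
          Real.sq_sqrt (show (0:ℝ) ≤ 2 by norm_num), Real.sqrt_nonneg 5,
          Real.sqrt_nonneg 2, hs2]
      linarith
    · have h9 : Real.sqrt 9 = 3 := by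
        rw [show (9:ℝ) = 3^2 by norm_num, Real.sqrt_sq (by norm_num : (0:ℝ) ≤ 3)]
      have h10 : Real.sqrt 10 < 2 + Real.sqrt 2 := by
        nlinarith [Real.sq_sqrt (show (0:ℝ) ≤ 10 by norm_num),
          Real.sq_sqrt (show (0:ℝ) ≤ 2 by norm_num), Real.sqrt_nonneg 10,
          Real.sqrt_nonneg 2, hs2]
      linarith
  linarith
end

section
/- Let n ≥ 6 and let G1 ∈ β2, G2 ∈ β3, G3 ∈ β9 be chemical bicyclic graphs on n vertices. Then SO_red(G1) < SO_red(G2) < SO_red(G3), and every chemical bicyclic graph G on n vertices belonging to none of the classes β2, β3, β9 satisfies SO_red(G3) < SO_red(G). -/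
open SimpleGraph

/-- Number of edges of a finite graph. -/
noncomputable def numEdges {V : Type*} [Fintype V] (G : SimpleGraph V) : ℕ :=
  (Set.toFinite G.edgeSet).toFinset.card

/-- Number of vertices of degree `i`. -/
noncomputable def nDeg {V : Type*} [Fintype V] (G : SimpleGraph V) (i : ℕ) : ℕ :=
  (Finset.univ.filter fun v => gdeg G v = i).card

open scoped Classical in
/-- `mij G i j` is the number of edges joining a vertex of degree `i` with a vertex of degree `j`. -/
noncomputable def mij {V : Type*} [Fintype V] (G : SimpleGraph V) (i j : ℕ) : ℕ :=
  ((Set.toFinite G.edgeSet).toFinset.filter fun e =>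
    Sym2.lift ⟨fun u v => ((gdeg G u = i ∧ gdeg G v = j) ∨ (gdeg G u = j ∧ gdeg G v = i)),
      fun u v => propext (by tauto)⟩ e).card

/-- A chemical tree: a tree in which every vertex has degree at most 4. -/
def IsChemicalTree {V : Type*} [Fintype V] (G : SimpleGraph V) : Prop :=
  G.IsTree ∧ ∀ v, gdeg G v ≤ 4

/-- A chemical bicyclic graph: connected, one more edge than vertices, max degree at most 4. -/
def IsChemicalBicyclic {V : Type*} [Fintype V] (G : SimpleGraph V) : Prop :=
  G.Connected ∧ numEdges G = Fintype.card V + 1 ∧ ∀ v, gdeg G v ≤ 4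

/-- The class β₂. -/
def InBeta2 {V : Type*} [Fintype V] (G : SimpleGraph V) : Prop :=
  IsChemicalBicyclic G ∧ nDeg G 3 = 2 ∧ nDeg G 2 = Fintype.card V - 2 ∧
    mij G 2 3 = 4 ∧ mij G 3 3 = 1 ∧ mij G 2 2 = Fintype.card V - 4

/-- The class β₃. -/
def InBeta3 {V : Type*} [Fintype V] (G : SimpleGraph V) : Prop :=
  IsChemicalBicyclic G ∧ nDeg G 3 = 2 ∧ nDeg G 2 = Fintype.card V - 2 ∧
    mij G 2 3 = 6 ∧ mij G 2 2 = Fintype.card V - 5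

/-- The class β₉. -/
def InBeta9 {V : Type*} [Fintype V] (G : SimpleGraph V) : Prop :=
  IsChemicalBicyclic G ∧ nDeg G 3 = 3 ∧ nDeg G 1 = 1 ∧
    nDeg G 2 = Fintype.card V - 4 ∧
    mij G 1 2 = 1 ∧ mij G 2 3 = 3 ∧ mij G 3 3 = 3 ∧ mij G 2 2 = Fintype.card V - 6

/-!
Write `m i j` for the number of edges with end degrees `i ≤ j` and `ν i` for the number of
vertices of degree `i`. Counting vertices through edge ends gives `∑ m i j (1/i + 1/j) = N`, and
`∑ m i j = N + 1`; together they rewrite the index as `SO_red = (N + 4)√2 + ∑ m i j r i j` with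
`r i j = √((i-1)² + (j-1)²) - 4√2 + 3√2 (1/i + 1/j) ≥ 0`, where `r 2 2 = r 3 3 = 0`.
The classes β₂, β₃, β₉ have excess `∑ m i j r i j` equal to
`4√5 - 6√2 < 6√5 - 9√2 < 1 + 3√5 - 4√2`. An excess at most the last value leaves at most one
pendant edge and (as `m 4 4 ≤ C(ν 4, 2)`) no vertex of degree 4, so that `ν 3 = 2 + m 1 2 + m 1 3`,
and then `m 3 3 ≤ C(ν 3, 2)` singles out the edge patterns of β₂, β₃ and β₉.
-/

open Finset

theorem sym2_Icc_one_four : (Icc 1 4 : Finset ℕ).sym2 =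
    {s(1,1), s(1,2), s(1,3), s(1,4), s(2,2), s(2,3), s(2,4), s(3,3), s(3,4), s(4,4)} := by
  decide

section Graph

variable {V : Type*} [Fintype V] (G : SimpleGraph V)

theorem gdeg_eq_degree (v : V) [Fintype (G.neighborSet v)] : gdeg G v = G.degree v := by
  rw [gdeg, Set.toFinite_toFinset]
  rfl

theorem one_le_gdeg_of_adj {u w : V} (h : G.Adj u w) : 1 ≤ gdeg G u :=
  card_pos.mpr ⟨w, by simpa using h⟩

theorem one_le_gdeg_of_connected (hconn : G.Connected) (hV : 2 ≤ Fintype.card V) (v : V) :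
    1 ≤ gdeg G v := by
  classical
  have : Nontrivial V := Fintype.one_lt_card_iff_nontrivial.mp hV
  rw [gdeg_eq_degree]
  exact hconn.preconnected.degree_pos_of_nontrivial v

theorem mij_eq_card_filter (i j : ℕ) :
    mij G i j = #{e ∈ (Set.toFinite G.edgeSet).toFinset | e.map (gdeg G) = s(i, j)} := by
  classical
  rw [mij]
  congr 1
  refine filter_congr fun e _ => ?_
  induction e using Sym2.ind with
  | _ u w => simp

theorem mij_self_le_choose (i : ℕ) : mij G i i ≤ (nDeg G i).choose 2 := by
  classical
  rw [mij_eq_card_filter, nDeg, ← Sym2.card_image_offDiag]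
  refine card_le_card fun e he => ?_
  induction e using Sym2.ind with
  | _ u w =>
    obtain ⟨hadj, hu, hw⟩ : G.Adj u w ∧ gdeg G u = i ∧ gdeg G w = i := by simpa using he
    exact mem_image.mpr ⟨(u, w), by simp [hu, hw, hadj.ne], rfl⟩

theorem sum_edgeSet_eq_sum_mij {M : Type*} [AddCommMonoid M] (hmax : ∀ v, gdeg G v ≤ 4)
    (F : Sym2 ℕ → M) :
    ∑ e ∈ (Set.toFinite G.edgeSet).toFinset, F (e.map (gdeg G)) =
      mij G 1 1 • F s(1,1) + mij G 1 2 • F s(1,2) + mij G 1 3 • F s(1,3) + mij G 1 4 • F s(1,4)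
      + mij G 2 2 • F s(2,2) + mij G 2 3 • F s(2,3) + mij G 2 4 • F s(2,4)
      + mij G 3 3 • F s(3,3) + mij G 3 4 • F s(3,4) + mij G 4 4 • F s(4,4) := by
  have hmaps : ∀ e ∈ (Set.toFinite G.edgeSet).toFinset, e.map (gdeg G) ∈ (Icc 1 4).sym2 := by
    intro e he
    induction e using Sym2.ind with
    | _ u w =>
      have hadj : G.Adj u w := by simpa using he
      simp only [Sym2.map_mk, mk_mem_sym2_iff, mem_Icc]
      exact ⟨⟨one_le_gdeg_of_adj G hadj, hmax u⟩, ⟨one_le_gdeg_of_adj G hadj.symm, hmax w⟩⟩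
  rw [← sum_fiberwise_of_maps_to' hmaps, sym2_Icc_one_four]
  simp [mij_eq_card_filter, add_assoc]

theorem numEdges_eq_sum_mij (hmax : ∀ v, gdeg G v ≤ 4) :
    numEdges G = mij G 1 1 + mij G 1 2 + mij G 1 3 + mij G 1 4 + mij G 2 2 + mij G 2 3
      + mij G 2 4 + mij G 3 3 + mij G 3 4 + mij G 4 4 := by
  rw [numEdges, card_eq_sum_ones]
  exact (sum_edgeSet_eq_sum_mij G hmax fun _ => 1).trans (by simp only [smul_eq_mul, mul_one])

theorem mul_nDeg_eq_sum_count (i : ℕ) :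
    i * nDeg G i =
      ∑ e ∈ (Set.toFinite G.edgeSet).toFinset, (e.map (gdeg G)).toMultiset.count i := by
  classical
  set E := (Set.toFinite G.edgeSet).toFinset
  have hinc : ∀ v, gdeg G v = #{e ∈ E | v ∈ e} := fun v => by
    rw [gdeg_eq_degree, ← card_incidenceFinset_eq_degree, incidenceFinset_eq_filter]
    simp only [E, Set.toFinite_toFinset]
    rfl
  calc i * nDeg G i = ∑ v with gdeg G v = i, gdeg G v := by
        rw [sum_congr rfl fun v hv => (mem_filter.1 hv).2, sum_const, smul_eq_mul, mul_comm, nDeg]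
    _ = ∑ v with gdeg G v = i, #{e ∈ E | v ∈ e} := sum_congr rfl fun v _ => hinc v
    _ = ∑ e ∈ E, #{v ∈ {v | gdeg G v = i} | v ∈ e} :=
        sum_card_bipartiteAbove_eq_sum_card_bipartiteBelow _
    _ = _ := sum_congr rfl fun e he => ?_
  induction e using Sym2.ind with
  | _ u w =>
    have huw : u ≠ w := G.ne_of_adj (by simpa [E] using he)
    have hset : ({v ∈ {v | gdeg G v = i} | v ∈ s(u, w)} : Finset V) =
        ({u, w} : Finset V).filter (gdeg G · = i) := by
      ext
      simp only [mem_filter, mem_univ, true_and, mem_insert, mem_singleton, Sym2.mem_iff]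
      tauto
    rw [hset, filter_insert, filter_singleton, Sym2.map_mk]
    simp only [Sym2.toMultiset, Sym2.lift_mk]
    by_cases hu : gdeg G u = i <;> by_cases hw : gdeg G w = i <;> simp [hu, hw, huw]

theorem card_eq_sum_nDeg (hdeg : ∀ v, 1 ≤ gdeg G v ∧ gdeg G v ≤ 4) :
    Fintype.card V = nDeg G 1 + nDeg G 2 + nDeg G 3 + nDeg G 4 := by
  rw [← card_univ, card_eq_sum_card_fiberwise (t := Icc 1 4) (fun v _ => mem_Icc.mpr (hdeg v)),
    show (Icc 1 4 : Finset ℕ) = {1, 2, 3, 4} by decide]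
  simp [nDeg, add_assoc]

end Graph

/-- `m i j` (`i ≤ j`) stands for `mij G i j`, `ν i` for `nDeg G i` and `N` for the number of
vertices. -/
structure BicyclicDegreeCounts (m : ℕ → ℕ → ℕ) (ν : ℕ → ℕ) (N : ℕ) : Prop where
  edges : m 1 1 + m 1 2 + m 1 3 + m 1 4 + m 2 2 + m 2 3 + m 2 4 + m 3 3 + m 3 4 + m 4 4 = N + 1
  vertices : ν 1 + ν 2 + ν 3 + ν 4 = N
  handshake_one : ν 1 = 2 * m 1 1 + m 1 2 + m 1 3 + m 1 4
  handshake_two : 2 * ν 2 = m 1 2 + 2 * m 2 2 + m 2 3 + m 2 4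
  handshake_three : 3 * ν 3 = m 1 3 + m 2 3 + 2 * m 3 3 + m 3 4
  handshake_four : 4 * ν 4 = m 1 4 + m 2 4 + m 3 4 + 2 * m 4 4
  three_three_le : m 3 3 ≤ (ν 3).choose 2
  four_four_le : m 4 4 ≤ (ν 4).choose 2

theorem BicyclicDegreeCounts.of_isChemicalBicyclic {V : Type*} [Fintype V] (G : SimpleGraph V)
    (hG : IsChemicalBicyclic G) (hV : 2 ≤ Fintype.card V) :
    BicyclicDegreeCounts (mij G) (nDeg G) (Fintype.card V) := by
  obtain ⟨hconn, hE, hmax⟩ := hG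
  have hand (i : ℕ) := (mul_nDeg_eq_sum_count G i).trans
    (sum_edgeSet_eq_sum_mij G hmax fun z => z.toMultiset.count i)
  have h1 := hand 1
  have h2 := hand 2
  have h3 := hand 3
  have h4 := hand 4
  simp only [Sym2.toMultiset, Sym2.lift_mk, Multiset.coe_count, List.count_cons, List.count_nil,
    beq_iff_eq, Nat.reduceEqDiff, ↓reduceIte, smul_eq_mul] at h1 h2 h3 h4
  exact ⟨(numEdges_eq_sum_mij G hmax).symm.trans hE,
    (card_eq_sum_nDeg G fun v => ⟨one_le_gdeg_of_connected G hconn hV v, hmax v⟩).symm,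
    by omega, by omega, by omega, by omega, mij_self_le_choose G 3, mij_self_le_choose G 4⟩

noncomputable def redSombor (m : ℕ → ℕ → ℕ) : ℝ :=
  m 1 2 + 2 * m 1 3 + 3 * m 1 4 + √2 * m 2 2 + √5 * m 2 3 + √10 * m 2 4 + 2 * √2 * m 3 3
    + √13 * m 3 4 + 3 * √2 * m 4 4

theorem SOred_eq_redSombor {V : Type*} [Fintype V] (G : SimpleGraph V)
    (hmax : ∀ v, gdeg G v ≤ 4) : SOred G = redSombor (mij G) := by
  let w : Sym2 ℕ → ℝ := Sym2.lift ⟨fun i j => √(((i : ℝ) - 1) ^ 2 + ((j : ℝ) - 1) ^ 2),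
    fun _ _ => by dsimp only; rw [add_comm]⟩
  have hS : SOred G = ∑ e ∈ (Set.toFinite G.edgeSet).toFinset, w (e.map (gdeg G)) :=
    sum_congr rfl fun e _ => by induction e using Sym2.ind; rfl
  have h4 : √4 = 2 := by rw [Real.sqrt_eq_iff_mul_self_eq_of_pos] <;> norm_num
  have h9 : √9 = 3 := by rw [Real.sqrt_eq_iff_mul_self_eq_of_pos] <;> norm_num
  have h8 : √8 = 2 * √2 := by
    rw [Real.sqrt_eq_iff_mul_self_eq_of_pos (by positivity)]; ring_nf; norm_num
  have h18 : √18 = 3 * √2 := by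
    rw [Real.sqrt_eq_iff_mul_self_eq_of_pos (by positivity)]; ring_nf; norm_num
  rw [hS, sum_edgeSet_eq_sum_mij G hmax w, redSombor]
  norm_num [w, h4, h9, h8, h18]
  ring

/-- The coefficient of `m i j` is `√((i-1)² + (j-1)²) - 4√2 + 3√2 (1/i + 1/j)`. -/
noncomputable def redSomborExcess (m : ℕ → ℕ → ℕ) : ℝ :=
  2 * √2 * m 1 1 + (1 + √2 / 2) * m 1 2 + 2 * m 1 3 + (3 - √2 / 4) * m 1 4
    + (√5 - 3 * √2 / 2) * m 2 3 + (√10 - 7 * √2 / 4) * m 2 4 + (√13 - 9 * √2 / 4) * m 3 4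
    + √2 / 2 * m 4 4

namespace BicyclicDegreeCounts

variable {m : ℕ → ℕ → ℕ} {ν : ℕ → ℕ} {N : ℕ}

/-- `12 (#edges - #vertices) = 12`, each edge `ij` contributing `12 (1 - 1/i - 1/j)`. -/
theorem curvature (h : BicyclicDegreeCounts m ν N) :
    2 * m 2 3 + 3 * m 2 4 + 4 * m 3 3 + 5 * m 3 4 + 6 * m 4 4 =
      12 + 12 * m 1 1 + 6 * m 1 2 + 4 * m 1 3 + 3 * m 1 4 := by
  obtain ⟨hE, hV, h1, h2, h3, h4, -, -⟩ := h
  linear_combination 12 * hE - 12 * hV + 12 * h1 + 6 * h2 + 4 * h3 + 3 * h4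

theorem redSombor_eq (h : BicyclicDegreeCounts m ν N) :
    redSombor m = (N + 4) * √2 + redSomborExcess m := by
  have hE : ((m 1 1 + m 1 2 + m 1 3 + m 1 4 + m 2 2 + m 2 3 + m 2 4 + m 3 3 + m 3 4 + m 4 4 : ℕ)
      : ℝ) = N + 1 := by exact_mod_cast h.edges
  have hcurv : ((2 * m 2 3 + 3 * m 2 4 + 4 * m 3 3 + 5 * m 3 4 + 6 * m 4 4 : ℕ) : ℝ) =
      ((12 + 12 * m 1 1 + 6 * m 1 2 + 4 * m 1 3 + 3 * m 1 4 : ℕ) : ℝ) := by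
    exact_mod_cast h.curvature
  push_cast at hE hcurv
  unfold redSombor redSomborExcess
  linear_combination √2 * hE + (√2 / 4) * hcurv

theorem redSomborExcess_of_beta2 (h : BicyclicDegreeCounts m ν N)
    (hβ : ν 3 = 2 ∧ ν 2 = N - 2 ∧ m 2 3 = 4 ∧ m 3 3 = 1 ∧ m 2 2 = N - 4) :
    redSomborExcess m = 4 * √5 - 6 * √2 := by
  obtain ⟨-, hV, h1, -, -, h4, -, -⟩ := h
  obtain ⟨hν3, hν2, h23, -, -⟩ := hβ
  obtain ⟨h11, h12, h13, h14, h24, h34, h44⟩ : m 1 1 = 0 ∧ m 1 2 = 0 ∧ m 1 3 = 0 ∧ m 1 4 = 0 ∧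
      m 2 4 = 0 ∧ m 3 4 = 0 ∧ m 4 4 = 0 := by omega
  simp only [redSomborExcess, h11, h12, h13, h14, h23, h24, h34, h44]
  push_cast
  ring

theorem redSomborExcess_of_beta3 (h : BicyclicDegreeCounts m ν N)
    (hβ : ν 3 = 2 ∧ ν 2 = N - 2 ∧ m 2 3 = 6 ∧ m 2 2 = N - 5) :
    redSomborExcess m = 6 * √5 - 9 * √2 := by
  obtain ⟨-, hV, h1, -, -, h4, -, -⟩ := h
  obtain ⟨hν3, hν2, h23, -⟩ := hβ
  obtain ⟨h11, h12, h13, h14, h24, h34, h44⟩ : m 1 1 = 0 ∧ m 1 2 = 0 ∧ m 1 3 = 0 ∧ m 1 4 = 0 ∧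
      m 2 4 = 0 ∧ m 3 4 = 0 ∧ m 4 4 = 0 := by omega
  simp only [redSomborExcess, h11, h12, h13, h14, h23, h24, h34, h44]
  push_cast
  ring

theorem redSomborExcess_of_beta9 (h : BicyclicDegreeCounts m ν N)
    (hβ : ν 3 = 3 ∧ ν 1 = 1 ∧ ν 2 = N - 4 ∧ m 1 2 = 1 ∧ m 2 3 = 3 ∧ m 3 3 = 3 ∧ m 2 2 = N - 6) :
    redSomborExcess m = 1 + 3 * √5 - 4 * √2 := by
  obtain ⟨hE, hV, h1, -, -, h4, -, -⟩ := h
  obtain ⟨hν3, hν1, hν2, h12, h23, h33, h22⟩ := hβ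
  obtain ⟨h11, h13, h14, h24, h34, h44⟩ : m 1 1 = 0 ∧ m 1 3 = 0 ∧ m 1 4 = 0 ∧
      m 2 4 = 0 ∧ m 3 4 = 0 ∧ m 4 4 = 0 := by omega
  simp only [redSomborExcess, h11, h12, h13, h14, h23, h24, h34, h44]
  push_cast
  ring

theorem cases_of_cost_le (h : BicyclicDegreeCounts m ν N)
    (hcost : 280 * m 1 1 + 170 * m 1 2 + 200 * m 1 3 + 260 * m 1 4 + 11 * m 2 3 + 68 * m 2 4
      + 42 * m 3 4 + 70 * m 4 4 ≤ 206) :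
    (ν 3 = 2 ∧ ν 2 = N - 2 ∧ m 2 3 = 4 ∧ m 3 3 = 1 ∧ m 2 2 = N - 4) ∨
    (ν 3 = 2 ∧ ν 2 = N - 2 ∧ m 2 3 = 6 ∧ m 2 2 = N - 5) ∨
    (ν 3 = 3 ∧ ν 1 = 1 ∧ ν 2 = N - 4 ∧ m 1 2 = 1 ∧ m 2 3 = 3 ∧ m 3 3 = 3 ∧ m 2 2 = N - 6) := by
  obtain ⟨hm11, hm14⟩ : m 1 1 = 0 ∧ m 1 4 = 0 := by omega
  have hcurv := h.curvature
  rw [hm11, hm14] at hcurv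
  have h4 := h.handshake_four
  have hν4 : ν 4 = 0 := by
    have h44 := h.four_four_le
    rcases Nat.lt_or_ge (ν 4) 2 with hl | hl
    · interval_cases ν 4
      · rfl
      · simp only [Nat.choose] at h44
        omega
    · omega
  obtain ⟨hm24, hm34, hm44⟩ : m 2 4 = 0 ∧ m 3 4 = 0 ∧ m 4 4 = 0 := by omega
  rw [hm24, hm34, hm44] at hcurv
  have hm1 : m 1 2 + m 1 3 ≤ 1 := by omega
  have hν3 : ν 3 = 2 + m 1 2 + m 1 3 := by have := h.handshake_three; omega
  have h33 := h.three_three_le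
  obtain ⟨hE, hV, h1, -, -, -, -, -⟩ := h
  rcases Nat.le_one_iff_eq_zero_or_eq_one.mp hm1 with hm1 | hm1
  · replace hν3 : ν 3 = 2 := by omega
    rw [hν3] at h33
    simp only [Nat.choose] at h33
    rcases Nat.lt_or_ge (m 3 3) 1 with h0 | h0
    · right; left; refine ⟨hν3, ?_, ?_, ?_⟩ <;> omega
    · left; refine ⟨hν3, ?_, ?_, ?_, ?_⟩ <;> omega
  · replace hν3 : ν 3 = 3 := by omega
    rw [hν3] at h33
    simp only [Nat.choose] at h33
    have hm12 : m 1 2 = 1 := by omega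
    right; right; refine ⟨hν3, ?_, ?_, hm12, ?_, ?_, ?_⟩ <;> omega

end BicyclicDegreeCounts

theorem sqrt_two_bounds : 1.4142 < √2 ∧ √2 < 1.4143 :=
  ⟨(Real.lt_sqrt (by norm_num)).2 (by norm_num), (Real.sqrt_lt' (by norm_num)).2 (by norm_num)⟩

theorem sqrt_five_bounds : 2.236 < √5 ∧ √5 < 2.2361 :=
  ⟨(Real.lt_sqrt (by norm_num)).2 (by norm_num), (Real.sqrt_lt' (by norm_num)).2 (by norm_num)⟩

/-- The coefficients are lower bounds, in hundredths, for those of `redSomborExcess`, and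
`100 (1 + 3√5 - 4√2) ≈ 205.1`. -/
theorem cost_le_of_redSomborExcess_le {m : ℕ → ℕ → ℕ}
    (h : redSomborExcess m ≤ 1 + 3 * √5 - 4 * √2) :
    280 * m 1 1 + 170 * m 1 2 + 200 * m 1 3 + 260 * m 1 4 + 11 * m 2 3 + 68 * m 2 4
      + 42 * m 3 4 + 70 * m 4 4 ≤ 206 := by
  obtain ⟨h2, h2'⟩ := sqrt_two_bounds
  obtain ⟨h5, h5'⟩ := sqrt_five_bounds
  have h10 : 3.16 < √10 := (Real.lt_sqrt (by norm_num)).2 (by norm_num)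
  have h13 : 3.605 < √13 := (Real.lt_sqrt (by norm_num)).2 (by norm_num)
  have hlow : 2.8 * m 1 1 + 1.7 * m 1 2 + 2 * m 1 3 + 2.6 * m 1 4 + 0.11 * m 2 3
      + 0.68 * m 2 4 + 0.42 * m 3 4 + 0.7 * m 4 4 ≤ redSomborExcess m := by
    unfold redSomborExcess
    gcongr ?_ * _ + ?_ * _ + ?_ * _ + ?_ * _ + ?_ * _ + ?_ * _ + ?_ * _ + ?_ * _ <;> linarith
  have hcost : ((280 * m 1 1 + 170 * m 1 2 + 200 * m 1 3 + 260 * m 1 4 + 11 * m 2 3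
      + 68 * m 2 4 + 42 * m 3 4 + 70 * m 4 4 : ℕ) : ℝ) < 207 := by
    push_cast
    linarith
  exact Nat.lt_succ_iff.mp (by exact_mod_cast hcost)

section Graph

variable {V : Type*} [Fintype V] (G : SimpleGraph V)

theorem SOred_eq_add_redSomborExcess (hG : IsChemicalBicyclic G) (hV : 2 ≤ Fintype.card V) :
    SOred G = (Fintype.card V + 4) * √2 + redSomborExcess (mij G) := by
  rw [SOred_eq_redSombor G hG.2.2,
    (BicyclicDegreeCounts.of_isChemicalBicyclic G hG hV).redSombor_eq]

theorem redSomborExcess_gt_of_not_beta (hG : IsChemicalBicyclic G) (hV : 2 ≤ Fintype.card V)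
    (hnot : ¬ InBeta2 G ∧ ¬ InBeta3 G ∧ ¬ InBeta9 G) :
    1 + 3 * √5 - 4 * √2 < redSomborExcess (mij G) := by
  by_contra! hle
  rcases (BicyclicDegreeCounts.of_isChemicalBicyclic G hG hV).cases_of_cost_le
    (cost_le_of_redSomborExcess_le hle) with hβ | hβ | hβ
  · exact hnot.1 ⟨hG, hβ⟩
  · exact hnot.2.1 ⟨hG, hβ⟩
  · exact hnot.2.2 ⟨hG, hβ⟩

end Graph

/-- Ordering of chemical bicyclic graphs on n ≥ 6 vertices by the index `SOred`. -/
theorem thm310 (n : ℕ) (hn : 6 ≤ n)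
    {V₁ : Type*} [Fintype V₁] (G₁ : SimpleGraph V₁) (hc₁ : Fintype.card V₁ = n)
    {V₂ : Type*} [Fintype V₂] (G₂ : SimpleGraph V₂) (hc₂ : Fintype.card V₂ = n)
    {V₃ : Type*} [Fintype V₃] (G₃ : SimpleGraph V₃) (hc₃ : Fintype.card V₃ = n)
    {V : Type*} [Fintype V] (G : SimpleGraph V) (hc : Fintype.card V = n)
    (h₁ : InBeta2 G₁) (h₂ : InBeta3 G₂) (h₃ : InBeta9 G₃)
    (hG : IsChemicalBicyclic G)
    (hGnot : ¬ InBeta2 G ∧ ¬ InBeta3 G ∧ ¬ InBeta9 G) :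
    SOred G₁ < SOred G₂ ∧ SOred G₂ < SOred G₃ ∧ SOred G₃ < SOred G := by
  rw [SOred_eq_add_redSomborExcess G₁ h₁.1 (by omega),
    SOred_eq_add_redSomborExcess G₂ h₂.1 (by omega),
    SOred_eq_add_redSomborExcess G₃ h₃.1 (by omega),
    SOred_eq_add_redSomborExcess G hG (by omega), hc₁, hc₂, hc₃, hc,
    (BicyclicDegreeCounts.of_isChemicalBicyclic G₁ h₁.1 (by omega)).redSomborExcess_of_beta2 h₁.2,
    (BicyclicDegreeCounts.of_isChemicalBicyclic G₂ h₂.1 (by omega)).redSomborExcess_of_beta3 h₂.2,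
    (BicyclicDegreeCounts.of_isChemicalBicyclic G₃ h₃.1 (by omega)).redSomborExcess_of_beta9 h₃.2]
  have hG_gt := redSomborExcess_gt_of_not_beta G hG (by omega) hGnot
  obtain ⟨h2, h2'⟩ := sqrt_two_bounds
  obtain ⟨h5, h5'⟩ := sqrt_five_bounds
  exact ⟨by linarith, by linarith, by linarith⟩
end
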